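/- arXiv:2107.03123 — 3 statements merged into one kernel-verified Lean document; each statement's English description precedes it below -/
import Mathlib

section
/- Every HRRC instance in which each resident's preference list has length at most 1 admits a strongly stable matching. -/
/-!
Weigh a pair `(r, h)` by `|pref h| - rank_h r`: the weight is positive on acceptable pairs and
larger for residents `h` prefers. Among the finitely many feasible matchings take one, `M`, of
maximal total weight. When every resident has at most one acceptable hospital, the resident `r`
of a blocking pair `(r, h)` is unassigned, so a strong blocking pair yields either `M ∪ {(r, h)}`
(feasible by clause (i), with a free seat at `h`) or `M` with some `r' ∈ M(h)` worse than `r`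
replaced by `r` (feasible, since `r'` leaves every region containing `h`). Both are feasible
matchings of larger weight.
-/


/-- `a` is strictly preferred to `b` in the strictly ordered preference list `l`
(most preferred first). -/
def ListPref {α : Type*} [DecidableEq α] (l : List α) (a b : α) : Prop :=
  b ∈ l ∧ l.idxOf a < l.idxOf b

/-- An instance of the Hospitals/Residents problem with Regional Caps (HRRC):
residents `R`, hospitals `H`, strict preference lists on both sides,
hospital capacities `q`, a family `regions` of regions with regional caps `cap`. -/
structure HRRC (R H : Type*) where
  prefR : R → List H
  prefH : H → List R
  q : H → ℕ
  regions : Set (Finset H)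
  cap : Finset H → ℕ

namespace HRRC

variable {R H : Type*} [DecidableEq R] [DecidableEq H]

/-- Well-formedness: preference lists are strict (no repetitions), acceptability is
mutual, and regions are nonempty. -/
def WellFormed (I : HRRC R H) : Prop :=
  (∀ r, (I.prefR r).Nodup) ∧ (∀ h, (I.prefH h).Nodup) ∧
  (∀ r h, h ∈ I.prefR r ↔ r ∈ I.prefH h) ∧
  (∀ E ∈ I.regions, E.Nonempty)

/-- `M(h)`: the set of residents assigned to hospital `h`. -/
def assignedTo (M : Finset (R × H)) (h : H) : Finset R :=
  (M.filter fun p => p.2 = h).image Prod.fst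

/-- `M(E)`: the set of residents assigned to some hospital in the region `E`. -/
def assignedIn (M : Finset (R × H)) (E : Finset H) : Finset R :=
  (M.filter fun p => p.2 ∈ E).image Prod.fst

/-- `M` is a matching: pairs are mutually acceptable, each resident has at most one
hospital, and no hospital exceeds its capacity. -/
def IsMatching (I : HRRC R H) (M : Finset (R × H)) : Prop :=
  (∀ p ∈ M, p.2 ∈ I.prefR p.1 ∧ p.1 ∈ I.prefH p.2) ∧
  (∀ r h h', (r, h) ∈ M → (r, h') ∈ M → h = h') ∧
  (∀ h, (assignedTo M h).card ≤ I.q h)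

/-- Feasibility: all regional caps are respected. -/
def FeasibleCaps (I : HRRC R H) (M : Finset (R × H)) : Prop :=
  ∀ E ∈ I.regions, (assignedIn M E).card ≤ I.cap E

/-- `M \ {(r, M(r))} ∪ {(r, h)}`. -/
def move (M : Finset (R × H)) (r : R) (h : H) : Finset (R × H) :=
  (M.filter fun p => p.1 ≠ r) ∪ {(r, h)}

/-- `(r, h)` is a blocking pair for `M`. -/
def IsBlockingPair (I : HRRC R H) (M : Finset (R × H)) (r : R) (h : H) : Prop :=
  (r, h) ∉ M ∧ (h ∈ I.prefR r ∧ r ∈ I.prefH h) ∧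
  ((∀ h', (r, h') ∉ M) ∨ ∃ h', (r, h') ∈ M ∧ ListPref (I.prefR r) h h') ∧
  ((assignedTo M h).card < I.q h ∨ ∃ r' ∈ assignedTo M h, ListPref (I.prefH h) r r')

/-- `(r, h)` is a strong blocking pair for `M`. -/
def IsSBP (I : HRRC R H) (M : Finset (R × H)) (r : R) (h : H) : Prop :=
  I.IsBlockingPair M r h ∧
  (I.FeasibleCaps (move M r h) ∨ ∃ r' ∈ assignedTo M h, ListPref (I.prefH h) r r')

/-- `M` is a strongly stable matching of `I`. -/
def IsStronglyStable (I : HRRC R H) (M : Finset (R × H)) : Prop :=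
  I.IsMatching M ∧ I.FeasibleCaps M ∧ ∀ r h, ¬ I.IsSBP M r h


variable {I : HRRC R H} {M N : Finset (R × H)} {r r' : R} {h : H} {E : Finset H}

lemma mem_assignedIn : r ∈ assignedIn M E ↔ ∃ h ∈ E, (r, h) ∈ M := by
  simp [assignedIn, and_comm]

lemma assignedTo_eq_assignedIn_singleton : assignedTo M h = assignedIn M {h} := by
  ext r
  simp [assignedTo, assignedIn]

lemma mem_assignedTo : r ∈ assignedTo M h ↔ (r, h) ∈ M := by
  simp [assignedTo_eq_assignedIn_singleton, mem_assignedIn]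

lemma assignedIn_mono (hNM : N ⊆ M) : assignedIn N E ⊆ assignedIn M E := fun r hr => by
  obtain ⟨h, hE, hrh⟩ := mem_assignedIn.mp hr
  exact mem_assignedIn.mpr ⟨h, hE, hNM hrh⟩

lemma assignedIn_insert_of_notMem (hE : h ∉ E) :
    assignedIn (insert (r, h) M) E = assignedIn M E := by
  ext r'
  simp only [mem_assignedIn, Finset.mem_insert, Prod.mk.injEq]
  constructor
  · rintro ⟨h', hh', ⟨-, rfl⟩ | hM⟩
    exacts [absurd hh' hE, ⟨h', hh', hM⟩]
  · rintro ⟨h', hh', hM⟩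
    exact ⟨h', hh', Or.inr hM⟩

lemma card_assignedIn_insert_le :
    (assignedIn (insert (r, h) M) E).card ≤ (assignedIn M E).card + 1 := by
  refine le_trans (Finset.card_le_card fun r' hr' => ?_) (Finset.card_insert_le r _)
  obtain ⟨h', hh', hM⟩ := mem_assignedIn.mp hr'
  rcases Finset.mem_insert.mp hM with heq | hM
  · exact Finset.mem_insert.mpr (Or.inl (Prod.mk.inj heq).1)
  · exact Finset.mem_insert_of_mem (mem_assignedIn.mpr ⟨h', hh', hM⟩)

lemma card_assignedIn_erase_lt (hrh : (r', h) ∈ M) (hE : h ∈ E)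
    (huniq : ∀ h', (r', h') ∈ M → h' = h) :
    (assignedIn (M.erase (r', h)) E).card < (assignedIn M E).card := by
  refine Finset.card_lt_card <| (Finset.ssubset_iff_of_subset
    (assignedIn_mono (Finset.erase_subset _ _))).mpr ⟨r', mem_assignedIn.mpr ⟨h, hE, hrh⟩, ?_⟩
  rintro hr'
  obtain ⟨h', -, hM⟩ := mem_assignedIn.mp hr'
  obtain ⟨hne, hM⟩ := Finset.mem_erase.mp hM
  exact hne (by rw [huniq h' hM])

lemma card_assignedTo_erase_lt (hrh : (r', h) ∈ M) (huniq : ∀ h', (r', h') ∈ M → h' = h) :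
    (assignedTo (M.erase (r', h)) h).card < (assignedTo M h).card := by
  simpa only [assignedTo_eq_assignedIn_singleton] using
    card_assignedIn_erase_lt hrh (Finset.mem_singleton_self h) huniq

lemma IsMatching.mono (hM : I.IsMatching M) (hNM : N ⊆ M) : I.IsMatching N := by
  refine ⟨fun p hp => hM.1 p (hNM hp), fun r h h' hh hh' => hM.2.1 r h h' (hNM hh) (hNM hh'),
    fun h => ?_⟩
  have hcap := hM.2.2 h
  rw [assignedTo_eq_assignedIn_singleton] at hcap ⊢
  exact (Finset.card_le_card (assignedIn_mono hNM)).trans hcap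

lemma IsMatching.insert (hM : I.IsMatching M) (hacc : h ∈ I.prefR r ∧ r ∈ I.prefH h)
    (hfree : ∀ h', (r, h') ∉ M) (hroom : (assignedTo M h).card < I.q h) :
    I.IsMatching (insert (r, h) M) := by
  refine ⟨?_, ?_, fun h' => ?_⟩
  · rintro p hp
    rcases Finset.mem_insert.mp hp with rfl | hp
    exacts [hacc, hM.1 p hp]
  · rintro r'' h₁ h₂ hh₁ hh₂
    rcases Finset.mem_insert.mp hh₁ with he₁ | hh₁ <;>
      rcases Finset.mem_insert.mp hh₂ with he₂ | hh₂
    · rw [(Prod.mk.inj he₁).2, (Prod.mk.inj he₂).2]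
    · exact absurd hh₂ ((Prod.mk.inj he₁).1 ▸ hfree h₂)
    · exact absurd hh₁ ((Prod.mk.inj he₂).1 ▸ hfree h₁)
    · exact hM.2.1 r'' h₁ h₂ hh₁ hh₂
  · have hcap := hM.2.2 h'
    rw [assignedTo_eq_assignedIn_singleton] at hroom hcap ⊢
    by_cases hh : h = h'
    · subst hh
      exact card_assignedIn_insert_le.trans hroom
    · rwa [assignedIn_insert_of_notMem (by simpa using hh)]

lemma FeasibleCaps.mono (hM : I.FeasibleCaps M) (hNM : N ⊆ M) : I.FeasibleCaps N :=
  fun E hE => (Finset.card_le_card (assignedIn_mono hNM)).trans (hM E hE)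

lemma FeasibleCaps.exchange (hM : I.FeasibleCaps M) (hNM : N ⊆ M)
    (hfreed : ∀ E ∈ I.regions, h ∈ E → (assignedIn N E).card < (assignedIn M E).card) :
    I.FeasibleCaps (insert (r, h) N) := by
  intro E hE
  by_cases hh : h ∈ E
  · exact card_assignedIn_insert_le.trans ((hfreed E hE hh).trans_le (hM E hE))
  · rw [assignedIn_insert_of_notMem hh]
    exact hM.mono hNM E hE

lemma move_eq_insert (hfree : ∀ h', (r, h') ∉ M) : move M r h = insert (r, h) M := by
  have hkeep : M.filter (fun p => p.1 ≠ r) = M :=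
    Finset.filter_true_of_mem fun p hp hpr => hfree p.2 (by rw [← hpr]; exact hp)
  rw [move, hkeep, Finset.union_comm, Finset.insert_eq]

def weight (I : HRRC R H) (p : R × H) : ℕ :=
  (I.prefH p.2).length - (I.prefH p.2).idxOf p.1

def totalWeight (I : HRRC R H) (M : Finset (R × H)) : ℕ :=
  ∑ p ∈ M, I.weight p

omit [DecidableEq H] in
lemma weight_pos (hr : r ∈ I.prefH h) : 0 < I.weight (r, h) :=
  Nat.sub_pos_of_lt (List.idxOf_lt_length_iff.mpr hr)

omit [DecidableEq H] in
lemma weight_lt_weight_of_listPref (hpref : ListPref (I.prefH h) r r') :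
    I.weight (r', h) < I.weight (r, h) := by
  have := List.idxOf_lt_length_iff.mpr hpref.1
  unfold ListPref at hpref
  simp only [weight]
  omega

lemma totalWeight_lt_totalWeight_insert (hrh : (r, h) ∉ M) (hr : r ∈ I.prefH h) :
    I.totalWeight M < I.totalWeight (insert (r, h) M) := by
  rw [totalWeight, totalWeight, Finset.sum_insert hrh]
  exact Nat.lt_add_of_pos_left (weight_pos hr)

lemma totalWeight_lt_totalWeight_swap (hr'h : (r', h) ∈ M) (hrh : (r, h) ∉ M)
    (hpref : ListPref (I.prefH h) r r') :
    I.totalWeight M < I.totalWeight (insert (r, h) (M.erase (r', h))) := by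
  have herase := Finset.sum_erase_add M I.weight hr'h
  have hlt := weight_lt_weight_of_listPref hpref
  rw [totalWeight, totalWeight, Finset.sum_insert fun h' => hrh (Finset.mem_of_mem_erase h')]
  omega

lemma _root_.List.eq_of_mem_of_length_le_one {α : Type*} {l : List α} {a b : α}
    (hl : l.length ≤ 1) (ha : a ∈ l) (hb : b ∈ l) : a = b := by
  match l, hl, ha, hb with
  | [_], _, ha, hb => rw [List.mem_singleton.mp ha, List.mem_singleton.mp hb]

lemma unmatched_of_isBlockingPair (hα : ∀ r, (I.prefR r).length ≤ 1) (hM : I.IsMatching M)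
    (hbp : I.IsBlockingPair M r h) : ∀ h', (r, h') ∉ M := fun _ hrh' =>
  hbp.1 (List.eq_of_mem_of_length_le_one (hα r) (hM.1 _ hrh').1 hbp.2.1.1 ▸ hrh')

lemma isStronglyStable_of_totalWeight_maximal (hα : ∀ r, (I.prefR r).length ≤ 1)
    (hM : I.IsMatching M) (hcaps : I.FeasibleCaps M)
    (hmax : ∀ M', I.IsMatching M' → I.FeasibleCaps M' → I.totalWeight M' ≤ I.totalWeight M) :
    I.IsStronglyStable M := by
  refine ⟨hM, hcaps, fun r h ⟨hbp, hstrong⟩ => ?_⟩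
  have hfree := unmatched_of_isBlockingPair hα hM hbp
  obtain ⟨hrh, hacc, -, hseat⟩ := hbp
  by_cases hswap : ∃ r' ∈ assignedTo M h, ListPref (I.prefH h) r r'
  · obtain ⟨r', hr', hpref⟩ := hswap
    have hr'h := mem_assignedTo.mp hr'
    have huniq : ∀ h', (r', h') ∈ M → h' = h := fun h' hh' => hM.2.1 r' h' h hh' hr'h
    have hmatch := (hM.mono (Finset.erase_subset (r', h) M)).insert hacc
      (fun h' hh' => hfree h' (Finset.mem_of_mem_erase hh'))
      ((card_assignedTo_erase_lt hr'h huniq).trans_le (hM.2.2 h))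
    have hfeas := hcaps.exchange (r := r) (Finset.erase_subset (r', h) M)
      fun E _ hE => card_assignedIn_erase_lt hr'h hE huniq
    exact (hmax _ hmatch hfeas).not_gt (totalWeight_lt_totalWeight_swap hr'h hrh hpref)
  · have hfeas := hstrong.resolve_right hswap
    rw [move_eq_insert hfree] at hfeas
    have hmatch := hM.insert hacc hfree (hseat.resolve_right hswap)
    exact (hmax _ hmatch hfeas).not_gt (totalWeight_lt_totalWeight_insert hrh hacc.2)

lemma exists_feasible_matching_totalWeight_maximal [Fintype H] (I : HRRC R H) :
    ∃ M, I.IsMatching M ∧ I.FeasibleCaps M ∧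
      ∀ M', I.IsMatching M' → I.FeasibleCaps M' → I.totalWeight M' ≤ I.totalWeight M := by
  classical
  let acceptable : Finset (R × H) := Finset.univ.biUnion fun h => (I.prefH h).toFinset ×ˢ {h}
  have hsub : ∀ M, I.IsMatching M → M ⊆ acceptable := fun M hM p hp =>
    Finset.mem_biUnion.mpr ⟨p.2, Finset.mem_univ _, Finset.mem_product.mpr
      ⟨List.mem_toFinset.mpr (hM.1 p hp).2, Finset.mem_singleton_self _⟩⟩
  let S := acceptable.powerset.filter fun M => I.IsMatching M ∧ I.FeasibleCaps M
  have hempty : ∅ ∈ S := by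
    simp [S, IsMatching, FeasibleCaps, assignedTo, assignedIn]
  obtain ⟨M, hMS, hmax⟩ := S.exists_max_image I.totalWeight ⟨∅, hempty⟩
  obtain ⟨-, hM, hcaps⟩ := Finset.mem_filter.mp hMS
  exact ⟨M, hM, hcaps, fun M' hM' hcaps' =>
    hmax M' (Finset.mem_filter.mpr ⟨Finset.mem_powerset.mpr (hsub M' hM'), hM', hcaps'⟩)⟩

end HRRC

theorem every_short_resident_list_HRRC_has_strongly_stable_matching_general
    {R H : Type*} [DecidableEq R] [DecidableEq H] [Fintype H]
    (I : HRRC R H)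
    (hα : ∀ r, (I.prefR r).length ≤ 1) :
    ∃ M : Finset (R × H), I.IsStronglyStable M := by
  obtain ⟨M, hM, hcaps, hmax⟩ := I.exists_feasible_matching_totalWeight_maximal
  exact ⟨M, HRRC.isStronglyStable_of_totalWeight_maximal hα hM hcaps hmax⟩

/-- Every HRRC instance in which each resident's preference list has length at most 1
admits a strongly stable matching. -/
theorem every_short_resident_list_HRRC_has_strongly_stable_matching
    {R H : Type*} [DecidableEq R] [DecidableEq H] [Fintype R] [Fintype H]
    (I : HRRC R H) (hwf : I.WellFormed)
    (hα : ∀ r, (I.prefR r).length ≤ 1) :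
    ∃ M : Finset (R × H), I.IsStronglyStable M :=
  every_short_resident_list_HRRC_has_strongly_stable_matching_general I hα
end

section
/- The HRRC instance G₂ defined by residents R = {r₁, r₂}, hospitals H = {h₁, h₂} each of capacity 1, preference lists r₁: h₁ ≻ h₂; r₂: h₂ ≻ h₁; h₁: r₂ ≻ r₁; h₂: r₁ ≻ r₂, and the single region {h₁, h₂} with regional cap 1, admits no strongly stable matching. -/
/-- The instance `G₂` of Kamada and Kojima: residents `r₁ = 0`, `r₂ = 1`,
hospitals `h₁ = 0`, `h₂ = 1`, each of capacity 1, preference lists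
`r₁: h₁ ≻ h₂`, `r₂: h₂ ≻ h₁`, `h₁: r₂ ≻ r₁`, `h₂: r₁ ≻ r₂`, and the single
region `{h₁, h₂}` with regional cap 1. -/
def G2 : HRRC (Fin 2) (Fin 2) where
  prefR := ![[0, 1], [1, 0]]
  prefH := ![[1, 0], [0, 1]]
  q := fun _ => 1
  regions := {({0, 1} : Finset (Fin 2))}
  cap := fun _ => 1

/-! Every matching of `G₂` has a strong blocking pair. The cap of the region `{h₁, h₂}` allows
at most one matched pair. The empty matching is blocked by `(r₁, h₁)`, since moving `r₁` there
is feasible. A pair `(rᵢ, hᵢ)` is blocked by the other resident, whom `hᵢ` prefers to `rᵢ`.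
A pair `(rᵢ, hⱼ)` with `i ≠ j` is blocked by `(rᵢ, hᵢ)`: `hᵢ` is vacant and moving `rᵢ` there
keeps a single resident in the region. -/

theorem ListPref.ne {α : Type*} [DecidableEq α] {l : List α} {a b : α} (h : ListPref l a b) :
    a ≠ b := by
  rintro rfl
  exact lt_irrefl _ h.2

namespace HRRC

variable {R H : Type*} [DecidableEq R] [DecidableEq H]

@[simp]
theorem assignedTo_empty (h : H) : assignedTo (∅ : Finset (R × H)) h = ∅ := rfl

@[simp]
theorem assignedTo_singleton (r : R) (h h' : H) :
    assignedTo {(r, h)} h' = if h = h' then {r} else ∅ := by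
  unfold assignedTo
  split_ifs with hh <;> simp [Finset.filter_singleton, hh]

@[simp]
theorem move_empty (r : R) (h : H) : move (∅ : Finset (R × H)) r h = {(r, h)} := by
  simp [move]

@[simp]
theorem move_singleton (r : R) (h h' : H) : move {(r, h')} r h = {(r, h)} := by
  simp [move, Finset.filter_singleton]

theorem feasibleCaps_singleton {I : HRRC R H} (hcap : ∀ E ∈ I.regions, 1 ≤ I.cap E)
    (p : R × H) : I.FeasibleCaps {p} := by
  intro E hE
  calc (assignedIn {p} E).card ≤ ({p} : Finset (R × H)).card :=
        Finset.card_image_le.trans (Finset.card_filter_le _ _)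
    _ ≤ I.cap E := by simpa using hcap E hE

theorem eq_empty_or_singleton_of_feasibleCaps {I : HRRC R H} {M : Finset (R × H)}
    (hM : I.IsMatching M) (hfeas : I.FeasibleCaps M) {E : Finset H} (hE : E ∈ I.regions)
    (hall : ∀ h, h ∈ E) (hcap : I.cap E ≤ 1) : M = ∅ ∨ ∃ p, M = {p} := by
  have hinj : Set.InjOn Prod.fst (M : Set (R × H)) := by
    rintro ⟨r, h⟩ hp ⟨r', h'⟩ hp' (rfl : r = r')
    rw [hM.2.1 r h h' hp hp']
  have hcard : M.card ≤ 1 := by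
    have := hfeas E hE
    rw [assignedIn, Finset.filter_true_of_mem fun p _ => hall p.2,
      Finset.card_image_of_injOn hinj] at this
    exact this.trans hcap
  rcases Nat.le_one_iff_eq_zero_or_eq_one.mp hcard with h0 | h1
  · exact Or.inl (Finset.card_eq_zero.mp h0)
  · exact Or.inr (Finset.card_eq_one.mp h1)

variable {I : HRRC R H} {M : Finset (R × H)} {r : R} {h : H}

theorem isSBP_of_unassigned_of_vacant (hr : ∀ h', (r, h') ∉ M)
    (hacc : h ∈ I.prefR r ∧ r ∈ I.prefH h) (hvac : (assignedTo M h).card < I.q h)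
    (hfeas : I.FeasibleCaps (move M r h)) : I.IsSBP M r h :=
  ⟨⟨hr h, hacc, Or.inl hr, Or.inl hvac⟩, Or.inl hfeas⟩

theorem isSBP_of_unassigned_of_outranks (hr : ∀ h', (r, h') ∉ M)
    (hacc : h ∈ I.prefR r ∧ r ∈ I.prefH h) {r' : R} (hr' : r' ∈ assignedTo M h)
    (hpref : ListPref (I.prefH h) r r') : I.IsSBP M r h :=
  ⟨⟨hr h, hacc, Or.inl hr, Or.inr ⟨r', hr', hpref⟩⟩, Or.inr ⟨r', hr', hpref⟩⟩

theorem isSBP_of_prefers_vacant (hM : I.IsMatching M) {h' : H} (hr : (r, h') ∈ M)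
    (hpref : ListPref (I.prefR r) h h') (hacc : h ∈ I.prefR r ∧ r ∈ I.prefH h)
    (hvac : (assignedTo M h).card < I.q h) (hfeas : I.FeasibleCaps (move M r h)) :
    I.IsSBP M r h :=
  ⟨⟨fun hrh => hpref.ne (hM.2.1 r h h' hrh hr), hacc, Or.inr ⟨h', hr, hpref⟩, Or.inl hvac⟩,
    Or.inl hfeas⟩

end HRRC

open HRRC

theorem Fin.two_ne_rev (r : Fin 2) : r ≠ r.rev := by
  fin_cases r <;> decide

theorem Fin.two_eq_or_eq_rev (r h : Fin 2) : h = r ∨ h = r.rev := by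
  fin_cases r <;> fin_cases h <;> decide

theorem G2_acceptable (r h : Fin 2) : h ∈ G2.prefR r ∧ r ∈ G2.prefH h := by
  fin_cases r <;> fin_cases h <;> simp [G2]

theorem G2_prefR_self (r : Fin 2) : ListPref (G2.prefR r) r r.rev := by
  fin_cases r <;> simp [G2, ListPref]

theorem G2_prefH_rev (h : Fin 2) : ListPref (G2.prefH h) h.rev h := by
  fin_cases h <;> simp [G2, ListPref]

theorem G2_one_le_cap : ∀ E ∈ G2.regions, 1 ≤ G2.cap E := fun _ _ => le_rfl

theorem G2_isSBP_empty : G2.IsSBP ∅ 0 0 :=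
  isSBP_of_unassigned_of_vacant (by simp) (G2_acceptable 0 0) (by simp [G2])
    (by simpa using feasibleCaps_singleton G2_one_le_cap _)

theorem G2_isSBP_singleton_self (r : Fin 2) : G2.IsSBP {(r, r)} r.rev r :=
  isSBP_of_unassigned_of_outranks (by simp [(Fin.two_ne_rev r).symm]) (G2_acceptable _ _)
    (by simp) (G2_prefH_rev r)

theorem G2_isSBP_singleton_rev {r : Fin 2} (hM : G2.IsMatching {(r, r.rev)}) :
    G2.IsSBP {(r, r.rev)} r r :=
  isSBP_of_prefers_vacant hM (by simp) (G2_prefR_self r) (G2_acceptable r r)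
    (by simp [G2, (Fin.two_ne_rev r).symm])
    (by simpa using feasibleCaps_singleton G2_one_le_cap _)

/-- `G₂` admits no strongly stable matching. -/
theorem G2_has_no_strongly_stable_matching :
    ¬ ∃ M : Finset (Fin 2 × Fin 2), G2.IsStronglyStable M := by
  rintro ⟨M, hM, hfeas, hstable⟩
  rcases eq_empty_or_singleton_of_feasibleCaps hM hfeas (E := {0, 1}) rfl
    (by decide) le_rfl with rfl | ⟨⟨r, h⟩, rfl⟩
  · exact hstable 0 0 G2_isSBP_empty
  · obtain rfl | rfl := Fin.two_eq_or_eq_rev r h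
    · exact hstable _ _ (G2_isSBP_singleton_self h)
    · exact hstable _ _ (G2_isSBP_singleton_rev hM)
end

section
/- Let I₀ be an HR instance, let h be a hospital of I₀ with positive capacity, and let I₁ be the HR instance identical to I₀ except that the capacity of h is decreased by 1. Let M₀ be any stable matching of I₀ and M₁ be any stable matching of I₁. Then (i) |M₁(h)| ≥ |M₀(h)| − 1, and (ii) |M₁(h')| ≥ |M₀(h')| for every hospital h' ≠ h. -/
/-- An instance of the Hospitals/Residents problem (HR): residents `R`,
hospitals `H`, strict preference lists on both sides, hospital capacities `q`. -/
structure HR (R H : Type*) where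
  prefR : R → List H
  prefH : H → List R
  q : H → ℕ

namespace HR

variable {R H : Type*} [DecidableEq R] [DecidableEq H]

/-- Well-formedness: preference lists are strict (no repetitions) and
acceptability is mutual. -/
def WellFormed (I : HR R H) : Prop :=
  (∀ r, (I.prefR r).Nodup) ∧ (∀ h, (I.prefH h).Nodup) ∧
  (∀ r h, h ∈ I.prefR r ↔ r ∈ I.prefH h)

/-- `M(h)`: the set of residents assigned to hospital `h`. -/
def assignedTo (M : Finset (R × H)) (h : H) : Finset R :=
  (M.filter fun p => p.2 = h).image Prod.fst

/-- `M` is a matching: pairs are mutually acceptable, each resident has at most one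
hospital, and no hospital exceeds its capacity. -/
def IsMatching (I : HR R H) (M : Finset (R × H)) : Prop :=
  (∀ p ∈ M, p.2 ∈ I.prefR p.1 ∧ p.1 ∈ I.prefH p.2) ∧
  (∀ r h h', (r, h) ∈ M → (r, h') ∈ M → h = h') ∧
  (∀ h, (assignedTo M h).card ≤ I.q h)

/-- `(r, h)` is a blocking pair for `M`. -/
def IsBlockingPair (I : HR R H) (M : Finset (R × H)) (r : R) (h : H) : Prop :=
  (r, h) ∉ M ∧ (h ∈ I.prefR r ∧ r ∈ I.prefH h) ∧
  ((∀ h', (r, h') ∉ M) ∨ ∃ h', (r, h') ∈ M ∧ ListPref (I.prefR r) h h') ∧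
  ((assignedTo M h).card < I.q h ∨ ∃ r' ∈ assignedTo M h, ListPref (I.prefH h) r r')

/-- `M` is a stable matching of `I`. -/
def IsStable (I : HR R H) (M : Finset (R × H)) : Prop :=
  I.IsMatching M ∧ ∀ r h, ¬ I.IsBlockingPair M r h

end HR

/-
The key fact is that a hospital `h` with fewer residents in `M₁` than in `M₀` is full in `M₁`;
since only `h₀` lost capacity, both inequalities follow. Let `X` be the residents strictly better
off in `M₁` and `A` the hospitals they occupy in `M₁`. Stability of `M₀` makes each hospital of `A`
full in `M₀` and preferring its `M₀`-residents to its `X`-residents, so by stability of `M₁` every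
resident that a hospital of `A` loses lies in `X`. As capacities only went down, each hospital of
`A` gains at most as many residents as it loses, and counting `X` both ways shows that it gains
exactly as many. Hence a resident `r` lost by `h` is not in `X`: it prefers `h` to its
`M₁`-partner, and since `(r, h)` does not block `M₁`, `h` is full in `M₁`.
-/

namespace ListPref

variable {α : Type*} [DecidableEq α] {l : List α} {a b : α}

theorem irrefl (l : List α) (a : α) : ¬ ListPref l a a :=
  fun h => lt_irrefl _ h.2

theorem asymm (hab : ListPref l a b) : ¬ ListPref l b a :=
  fun hba => lt_asymm hab.2 hba.2

theorem total (ha : a ∈ l) (hb : b ∈ l) (hne : a ≠ b) : ListPref l a b ∨ ListPref l b a := by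
  rcases lt_trichotomy (l.idxOf a) (l.idxOf b) with h | h | h
  · exact Or.inl ⟨hb, h⟩
  · exact absurd ((List.idxOf_inj ha).mp h) hne
  · exact Or.inr ⟨ha, h⟩

end ListPref

theorem Finset.forall_card_eq_and_biUnion_eq_of_subset {ι α : Type*} [DecidableEq α]
    {A : Finset ι} {f g : ι → Finset α} {X : Finset α} (hg : (A : Set ι).PairwiseDisjoint g)
    (hXf : X ⊆ A.biUnion f) (hgX : A.biUnion g ⊆ X) (hle : ∀ i ∈ A, (f i).card ≤ (g i).card) :
    (∀ i ∈ A, (f i).card = (g i).card) ∧ A.biUnion g = X := by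
  have hXle : X.card ≤ ∑ i ∈ A, (f i).card := (card_le_card hXf).trans card_biUnion_le
  have hgle : ∑ i ∈ A, (g i).card ≤ X.card := card_biUnion hg ▸ card_le_card hgX
  have hsum : ∑ i ∈ A, (f i).card = ∑ i ∈ A, (g i).card :=
    le_antisymm (sum_le_sum hle) (hgle.trans hXle)
  exact ⟨(sum_eq_sum_iff_of_le hle).mp hsum,
    eq_of_subset_of_card_le hgX (card_biUnion hg ▸ hsum ▸ hXle)⟩

namespace HR

section

variable {R H : Type*} [DecidableEq H] {I : HR R H} {M₀ M₁ : Finset (R × H)} {r : R} {h : H}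

def Improves (I : HR R H) (M : Finset (R × H)) (r : R) (h : H) : Prop :=
  (∀ h', (r, h') ∉ M) ∨ ∃ h', (r, h') ∈ M ∧ ListPref (I.prefR r) h h'

theorem improves_or_improves (hM₁ : ∀ h', (r, h') ∈ M₁ → h' ∈ I.prefR r)
    (hh : h ∈ I.prefR r) (hrh : (r, h) ∈ M₀) (hrh₁ : (r, h) ∉ M₁) :
    (∃ h', (r, h') ∈ M₁ ∧ I.Improves M₀ r h') ∨ I.Improves M₁ r h := by
  by_cases hmatched : ∃ h', (r, h') ∈ M₁
  · obtain ⟨h', hrh'⟩ := hmatched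
    have hne : h' ≠ h := fun he => hrh₁ (he ▸ hrh')
    rcases ListPref.total (hM₁ h' hrh') hh hne with hpref | hpref
    · exact Or.inl ⟨h', hrh', Or.inr ⟨h, hrh, hpref⟩⟩
    · exact Or.inr (Or.inr ⟨h', hrh', hpref⟩)
  · exact Or.inr (Or.inl fun h' hrh' => hmatched ⟨h', hrh'⟩)

end

variable {R H : Type*} [DecidableEq R] [DecidableEq H] {I : HR R H} {q₁ : H → ℕ}
  {M M₀ M₁ : Finset (R × H)} {r : R} {h : H}

theorem mem_assignedTo : r ∈ assignedTo M h ↔ (r, h) ∈ M := by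
  simp [assignedTo]

theorem IsMatching.not_mem_of_improves (hM : I.IsMatching M) (himp : I.Improves M r h) :
    (r, h) ∉ M := by
  intro hrh
  rcases himp with hfree | ⟨h', hrh', hpref⟩
  · exact hfree h hrh
  · exact ListPref.irrefl _ _ (hM.2.1 r h' h hrh' hrh ▸ hpref)

theorem IsMatching.pairwiseDisjoint_assignedTo (hM : I.IsMatching M) (s : Set H) :
    s.PairwiseDisjoint (assignedTo M) := by
  intro x _ y _ hxy
  rw [Function.onFun, Finset.disjoint_left]
  intro r hx hy
  exact hxy (hM.2.1 r x y (mem_assignedTo.mp hx) (mem_assignedTo.mp hy))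

theorem IsStable.not_vacancy_and_not_listPref_of_improves (hM : I.IsStable M)
    (hacc : h ∈ I.prefR r ∧ r ∈ I.prefH h) (himp : I.Improves M r h) :
    ¬ ((assignedTo M h).card < I.q h ∨ ∃ r' ∈ assignedTo M h, ListPref (I.prefH h) r r') :=
  fun hvac => hM.2 r h ⟨hM.1.not_mem_of_improves himp, hacc, himp, hvac⟩

theorem IsStable.card_assignedTo_eq_of_improves (hM : I.IsStable M)
    (hacc : h ∈ I.prefR r ∧ r ∈ I.prefH h) (himp : I.Improves M r h) :
    (assignedTo M h).card = I.q h := by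
  have := hM.not_vacancy_and_not_listPref_of_improves hacc himp
  exact le_antisymm (hM.1.2.2 h) (by omega)

theorem IsStable.listPref_of_improves (hM : I.IsStable M)
    (hacc : h ∈ I.prefR r ∧ r ∈ I.prefH h) (himp : I.Improves M r h) :
    ∀ r' ∈ assignedTo M h, ListPref (I.prefH h) r' r := by
  intro r' hr'
  have hr'M := mem_assignedTo.mp hr'
  have hne : r' ≠ r := fun he => hM.1.not_mem_of_improves himp (he ▸ hr'M)
  refine (ListPref.total (hM.1.1 _ hr'M).2 hacc.2 hne).resolve_right fun hpref => ?_
  exact hM.not_vacancy_and_not_listPref_of_improves hacc himp (Or.inr ⟨r', hr', hpref⟩)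

theorem exists_improves_of_mem_sdiff (hM₀ : I.IsStable M₀)
    (hM₁ : ({I with q := q₁} : HR R H).IsStable M₁) {x : R} (hxh : (x, h) ∈ M₁)
    (hx : I.Improves M₀ x h) (hr : r ∈ assignedTo M₀ h \ assignedTo M₁ h) :
    ∃ h', (r, h') ∈ M₁ ∧ I.Improves M₀ r h' := by
  rw [Finset.mem_sdiff, mem_assignedTo, mem_assignedTo] at hr
  have hacc := hM₀.1.1 _ hr.1
  refine (improves_or_improves (fun h' hrh' => (hM₁.1.1 _ hrh').1) hacc.1 hr.1 hr.2).resolve_right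
    fun hr₁ => ?_
  have hrx := hM₀.listPref_of_improves (hM₁.1.1 _ hxh) hx r (mem_assignedTo.mpr hr.1)
  exact hrx.asymm (hM₁.listPref_of_improves hacc hr₁ x (mem_assignedTo.mpr hxh))

theorem card_assignedTo_eq_of_mem_sdiff_of_improves (hq : ∀ h, q₁ h ≤ I.q h)
    (hM₀ : I.IsStable M₀) (hM₁ : ({I with q := q₁} : HR R H).IsStable M₁)
    (hr : r ∈ assignedTo M₀ h \ assignedTo M₁ h) {h' : H} (hrh' : (r, h') ∈ M₁)
    (himp : I.Improves M₀ r h') :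
    (assignedTo M₁ h).card = (assignedTo M₀ h).card := by
  classical
  set P := M₁.filter fun p => I.Improves M₀ p.1 p.2
  set X := P.image Prod.fst
  set A := P.image Prod.snd
  have hX : ∀ {r}, r ∈ X ↔ ∃ h, (r, h) ∈ M₁ ∧ I.Improves M₀ r h := by simp [X, P]
  have hA : ∀ {h}, h ∈ A ↔ ∃ r, (r, h) ∈ M₁ ∧ I.Improves M₀ r h := by simp [A, P]
  have hXA : X ⊆ A.biUnion fun h => assignedTo M₁ h \ assignedTo M₀ h := by
    intro r hr
    obtain ⟨h, hrh, himp⟩ := hX.mp hr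
    refine Finset.mem_biUnion.mpr ⟨h, hA.mpr ⟨r, hrh, himp⟩, Finset.mem_sdiff.mpr ⟨?_, ?_⟩⟩
    · exact mem_assignedTo.mpr hrh
    · exact mt mem_assignedTo.mp (hM₀.1.not_mem_of_improves himp)
  have hAX : (A.biUnion fun h => assignedTo M₀ h \ assignedTo M₁ h) ⊆ X := by
    refine Finset.biUnion_subset.mpr fun h hh r hr => ?_
    obtain ⟨x, hxh, hx⟩ := hA.mp hh
    exact hX.mpr (exists_improves_of_mem_sdiff hM₀ hM₁ hxh hx hr)
  have hle : ∀ h ∈ A, (assignedTo M₁ h \ assignedTo M₀ h).card ≤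
      (assignedTo M₀ h \ assignedTo M₁ h).card := by
    intro h hh
    obtain ⟨x, hxh, hx⟩ := hA.mp hh
    rw [Finset.card_sdiff_le_card_sdiff_iff]
    calc (assignedTo M₁ h).card ≤ q₁ h := hM₁.1.2.2 h
      _ ≤ I.q h := hq h
      _ = (assignedTo M₀ h).card := (hM₀.card_assignedTo_eq_of_improves (hM₁.1.1 _ hxh) hx).symm
  obtain ⟨hcard, hcover⟩ := Finset.forall_card_eq_and_biUnion_eq_of_subset
    ((hM₀.1.pairwiseDisjoint_assignedTo _).mono fun _ => Finset.sdiff_subset) hXA hAX hle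
  obtain ⟨h'', hh'', hrh''⟩ := Finset.mem_biUnion.mp (hcover ▸ hX.mpr ⟨h', hrh', himp⟩)
  obtain rfl : h'' = h := hM₀.1.2.1 r h'' h (mem_assignedTo.mp (Finset.mem_sdiff.mp hrh'').1)
    (mem_assignedTo.mp (Finset.mem_sdiff.mp hr).1)
  exact le_antisymm (Finset.card_sdiff_le_card_sdiff_iff.mp (hle h'' hh''))
    (Finset.card_sdiff_le_card_sdiff_iff.mp (hcard h'' hh'').ge)

theorem card_assignedTo_eq_of_lt (hq : ∀ h, q₁ h ≤ I.q h) (hM₀ : I.IsStable M₀)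
    (hM₁ : ({I with q := q₁} : HR R H).IsStable M₁)
    (hlt : (assignedTo M₁ h).card < (assignedTo M₀ h).card) :
    (assignedTo M₁ h).card = q₁ h := by
  obtain ⟨r, hr₀, hr₁⟩ := Finset.exists_mem_notMem_of_card_lt_card hlt
  have hrh := mem_assignedTo.mp hr₀
  have hacc := hM₀.1.1 _ hrh
  rcases improves_or_improves (fun h' hrh' => (hM₁.1.1 _ hrh').1) hacc.1 hrh
    (mt mem_assignedTo.mpr hr₁) with ⟨h', hrh', himp⟩ | himp
  · have := card_assignedTo_eq_of_mem_sdiff_of_improves hq hM₀ hM₁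
      (Finset.mem_sdiff.mpr ⟨hr₀, hr₁⟩) hrh' himp
    omega
  · exact hM₁.card_assignedTo_eq_of_improves hacc himp

end HR

theorem stable_matching_capacity_decrease_general
    {R H : Type*} [DecidableEq R] [DecidableEq H]
    (I₀ I₁ : HR R H)
    (h₀ : H)
    (hpR : I₁.prefR = I₀.prefR) (hpH : I₁.prefH = I₀.prefH)
    (hq : I₁.q = Function.update I₀.q h₀ (I₀.q h₀ - 1))
    (M₀ M₁ : Finset (R × H)) (hM₀ : I₀.IsStable M₀) (hM₁ : I₁.IsStable M₁) :
    (HR.assignedTo M₀ h₀).card ≤ (HR.assignedTo M₁ h₀).card + 1 ∧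
    ∀ h', h' ≠ h₀ → (HR.assignedTo M₀ h').card ≤ (HR.assignedTo M₁ h').card := by
  obtain ⟨_, _, q₁⟩ := I₁
  dsimp only at hpR hpH hq
  subst hpR hpH
  have hle : ∀ h, q₁ h ≤ I₀.q h := by
    intro h
    simp only [hq, Function.update_apply]
    split_ifs with hh <;> simp [hh]
  have hcap := hM₀.1.2.2
  have hfull := fun h => HR.card_assignedTo_eq_of_lt (h := h) hle hM₀ hM₁
  refine ⟨?_, fun h hne => ?_⟩
  · by_contra! hlt
    have := hfull h₀ (by omega)
    rw [hq, Function.update_self] at this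
    exact absurd (hcap h₀) (by omega)
  · by_contra! hlt
    have := hfull h hlt
    rw [hq, Function.update_of_ne hne] at this
    exact absurd (hcap h) (by omega)

/-- Let `I₀` be an HR instance, `h₀` a hospital with positive capacity, and `I₁`
the instance identical to `I₀` except that the capacity of `h₀` is decreased by 1.
For any stable matchings `M₀` of `I₀` and `M₁` of `I₁`:
(i) `|M₁(h₀)| ≥ |M₀(h₀)| − 1`, and (ii) `|M₁(h')| ≥ |M₀(h')|` for all `h' ≠ h₀`. -/
theorem stable_matching_capacity_decrease
    {R H : Type*} [DecidableEq R] [DecidableEq H] [Fintype R] [Fintype H]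
    (I₀ I₁ : HR R H) (hwf : I₀.WellFormed)
    (h₀ : H) (hpos : 0 < I₀.q h₀)
    (hpR : I₁.prefR = I₀.prefR) (hpH : I₁.prefH = I₀.prefH)
    (hq : I₁.q = Function.update I₀.q h₀ (I₀.q h₀ - 1))
    (M₀ M₁ : Finset (R × H)) (hM₀ : I₀.IsStable M₀) (hM₁ : I₁.IsStable M₁) :
    (HR.assignedTo M₀ h₀).card ≤ (HR.assignedTo M₁ h₀).card + 1 ∧
    ∀ h', h' ≠ h₀ → (HR.assignedTo M₀ h').card ≤ (HR.assignedTo M₁ h').card :=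
  stable_matching_capacity_decrease_general I₀ I₁ h₀ hpR hpH hq M₀ M₁ hM₀ hM₁
end
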